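/- arXiv:1108.4517 — 6 statements merged into one kernel-verified Lean document; each statement's English description precedes it below -/
import Mathlib

section
/- For every integer n ≥ 2 there exists a non-zero polynomial Q in n + 1 real variables s₁, …, sₙ, δ, with real coefficients, which is monic of degree 2^(n-1) in the variables s₁,…,sₙ (in the sense that the coefficient polynomial H_{n,2^{n-1}} is monic of total degree 2^(n-1)) and involves only even powers of δ, such that for all real numbers t₁, …, tₙ with t₁ + ⋯ + tₙ = δ one has Q(t₁², t₂², …, tₙ², δ) = 0. Moreover Q can be written as Q = Σ_{j=0}^{2^{n-1}} H_{n,j}(s₁,…,sₙ) δ^{2(2^{n-1}−j)} where H_{n,0} = 1 and each H_{n,j} is homogeneous of degree j. -/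
/-!
Let `P(δ, t) = ∏_ε (δ - Σⱼ εⱼ tⱼ)` over all sign vectors `ε ∈ {±1}ⁿ`. It vanishes when
`δ = Σⱼ tⱼ` and is homogeneous of degree `2ⁿ`. Changing the sign of one `tⱼ` permutes the
factors, so every exponent of `tⱼ` in `P` is even, and then so is the exponent of `δ` since the
total degree is even. Hence `P(δ, t) = Q(δ², t²)` with `Q(u, s)` homogeneous of degree `2ⁿ⁻¹`,
and `H_j` is the coefficient of `u^(2ⁿ⁻¹ - j)` in `Q`. The coefficient of `s₁^(2ⁿ⁻¹)` in `H_{2ⁿ⁻¹}`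
is `P(0, e₁) = ∏_ε (-ε₁)`, which is `1` once `n ≥ 2`.
-/

open MvPolynomial Finset

namespace MvPolynomial

variable {σ R : Type*}

section CommSemiring

variable [CommSemiring R]

theorem exists_expand_eq_of_forall_dvd {p : ℕ} {φ : MvPolynomial σ R}
    (h : ∀ d ∈ φ.support, ∀ i, p ∣ d i) : ∃ ψ, expand p ψ = φ := by
  classical
  suffices φ ∈ (expand p : MvPolynomial σ R →ₐ[R] _).range from this
  rw [φ.as_sum]
  refine Subalgebra.sum_mem _ fun d hd => ?_
  obtain ⟨m, rfl⟩ : ∃ m, d = p • m :=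
    ⟨d.mapRange (· / p) (Nat.zero_div p), by ext i; simp [Nat.mul_div_cancel' (h d hd i)]⟩
  exact ⟨monomial m _, expand_monomial p m _⟩

theorem IsHomogeneous.of_expand {p n : ℕ} (hp : p ≠ 0) {ψ : MvPolynomial σ R}
    (h : (expand p ψ).IsHomogeneous (p * n)) : ψ.IsHomogeneous n := by
  intro d hd
  rw [← coeff_expand_smul p hp] at hd
  have := h hd
  rw [map_nsmul, smul_eq_mul] at this
  exact Nat.eq_of_mul_eq_mul_left (Nat.pos_of_ne_zero hp) this

theorem IsHomogeneous.coeff_single_eq_eval [DecidableEq σ] {φ : MvPolynomial σ R} {n : ℕ}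
    (hφ : φ.IsHomogeneous n) (i : σ) :
    φ.coeff (Finsupp.single i n) = eval (Pi.single i 1) φ := by
  rw [eval_eq, Finset.sum_eq_single (Finsupp.single i n)]
  · rw [Finset.prod_eq_one, mul_one]
    intro j hj
    rw [Finset.mem_singleton.mp (Finsupp.support_single_subset hj)]
    simp
  · intro d hd hne
    obtain ⟨j, hj, hji⟩ : ∃ j ∈ d.support, j ≠ i := by
      by_contra! hsub
      have hdi : d = Finsupp.single i (d i) :=
        Finsupp.support_subset_singleton.mp fun j hj => Finset.mem_singleton.mpr (hsub j hj)
      have hdeg : d.degree = n := by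
        rw [Finsupp.degree_eq_weight_one]; exact hφ (mem_support_iff.mp hd)
      rw [hdi, Finsupp.degree_single] at hdeg
      exact hne (hdeg ▸ hdi)
    rw [Finset.prod_eq_zero hj (by simp [hji, Finsupp.mem_support_iff.mp hj]), mul_zero]
  · intro hns
    rw [notMem_support_iff.mp hns, zero_mul]

theorem IsHomogeneous.eval_cons_eq_sum {n N : ℕ} {φ : MvPolynomial (Fin (n + 1)) R}
    (hφ : φ.IsHomogeneous N) (y : R) (s : Fin n → R) :
    eval (Fin.cons y s) φ =
      ∑ j ∈ range (N + 1), eval s ((finSuccEquiv R n φ).coeff (N - j)) * y ^ (N - j) := by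
  have hdeg : ((finSuccEquiv R n φ).map (eval s)).natDegree < N + 1 :=
    calc _ ≤ (finSuccEquiv R n φ).natDegree := Polynomial.natDegree_map_le
      _ ≤ N := by
        rw [natDegree_finSuccEquiv]
        exact (degreeOf_le_totalDegree φ 0).trans hφ.totalDegree_le
      _ < N + 1 := N.lt_succ_self
  rw [eval_eq_eval_mv_eval', Polynomial.eval_eq_sum_range' hdeg, ← sum_range_reflect]
  simp [Polynomial.coeff_map]

end CommSemiring

section CommRing

variable [CommRing R] [DecidableEq σ]

noncomputable def negVar (i : σ) : MvPolynomial σ R →ₐ[R] MvPolynomial σ R :=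
  aeval fun j => C (if j = i then -1 else 1) * X j

theorem negVar_X (i j : σ) :
    negVar i (X j : MvPolynomial σ R) = if j = i then -X j else X j := by
  split_ifs with h <;> simp [negVar, h]

theorem negVar_monomial (i : σ) (d : σ →₀ ℕ) (c : R) :
    negVar i (monomial d c) = monomial d ((-1) ^ d i * c) := by
  have hsign : (d.prod fun j k => (if j = i then (-1 : R) else 1) ^ k) = (-1) ^ d i :=
    (Finsupp.prod_eq_single i (fun j _ hj => by simp [hj]) (fun _ => by simp)).trans (by simp)
  rw [negVar, aeval_monomial, monomial_eq]
  simp only [mul_pow, Finsupp.prod_mul, ← map_pow, ← map_finsuppProd, hsign, algebraMap_eq,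
    map_mul]
  ring

theorem coeff_negVar (i : σ) (φ : MvPolynomial σ R) (d : σ →₀ ℕ) :
    (negVar i φ).coeff d = (-1) ^ d i * φ.coeff d := by
  induction φ using induction_on' with
  | monomial e c =>
    rw [negVar_monomial, coeff_monomial, coeff_monomial]
    split_ifs with h <;> simp [h]
  | add φ ψ hφ hψ => rw [map_add, coeff_add, coeff_add, hφ, hψ, mul_add]

theorem even_of_negVar_eq_self [IsDomain R] [CharZero R] {i : σ} {φ : MvPolynomial σ R}
    (h : negVar i φ = φ) {d : σ →₀ ℕ} (hd : d ∈ φ.support) : Even (d i) := by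
  have := congrArg (coeff d) h
  rw [coeff_negVar, mul_eq_right₀ (mem_support_iff.mp hd)] at this
  exact (neg_one_pow_eq_one_iff_even (by norm_num)).mp this

end CommRing

end MvPolynomial

theorem Fintype.prod_ite_neg_one_eq_one {ι M : Type*} [Fintype ι] [DecidableEq ι] [Nontrivial ι]
    [CommMonoid M] [HasDistribNeg M] (i : ι) :
    ∏ ε : ι → Bool, (if ε i then -1 else 1 : M) = 1 := by
  obtain ⟨j, hji⟩ := exists_ne i
  refine prod_ninvolution (fun ε => Function.update ε j (!ε j)) (fun ε => ?_) (fun ε _ h => ?_)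
    (fun _ => mem_univ _) (fun ε => by simp)
  · rw [Function.update_of_ne hji.symm]
    split_ifs <;> simp
  · simpa using congrFun h j

namespace SquareElimination

variable (R : Type*) [CommRing R] {n : ℕ}

-- Variable `0` stands for `δ` and variable `j.succ` for `tⱼ`.
noncomputable def signedSum (ε : Fin n → Bool) : MvPolynomial (Fin (n + 1)) R :=
  ∑ j, if ε j then X j.succ else -X j.succ

noncomputable def signProd (n : ℕ) : MvPolynomial (Fin (n + 1)) R :=
  ∏ ε : Fin n → Bool, (X 0 - signedSum R ε)

theorem eval_signProd (x : Fin (n + 1) → R) :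
    eval x (signProd R n) =
      ∏ ε : Fin n → Bool, (x 0 - ∑ j, if ε j then x j.succ else -x j.succ) := by
  simp [signProd, signedSum, apply_ite]

theorem eval_piSingle_zero_signProd : eval (Pi.single 0 1) (signProd R n) = 1 := by
  simp [eval_signProd]

theorem eval_piSingle_succ_signProd (i : Fin n) :
    eval (Pi.single i.succ 1) (signProd R n) = ∏ ε : Fin n → Bool, if ε i then -1 else 1 := by
  refine (eval_signProd R _).trans (prod_congr rfl fun ε _ => ?_)
  simp only [Pi.single_apply, Fin.succ_inj, (Fin.succ_ne_zero i).symm, ↓reduceIte, zero_sub]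
  rw [sum_eq_single_of_mem i (mem_univ _) fun j _ hj => by simp [hj]]
  cases ε i <;> simp

theorem isHomogeneous_signProd : (signProd R n).IsHomogeneous (2 ^ n) := by
  have hcard : ∑ _ε : Fin n → Bool, 1 = 2 ^ n := by simp
  rw [signProd, ← hcard]
  refine IsHomogeneous.prod _ _ _ fun ε _ => ?_
  refine (isHomogeneous_X R 0).sub (IsHomogeneous.sum _ _ _ fun j _ => ?_)
  split_ifs
  · exact isHomogeneous_X R j.succ
  · exact (isHomogeneous_X R j.succ).neg

theorem negVar_succ_signedSum (i : Fin n) (ε : Fin n → Bool) :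
    negVar i.succ (signedSum R ε) = signedSum R (Function.update ε i (!ε i)) := by
  rw [signedSum, map_sum, signedSum]
  refine sum_congr rfl fun j _ => ?_
  rcases eq_or_ne j i with rfl | hj
  · cases ε j <;> simp [negVar_X]
  · rw [Function.update_of_ne hj]
    split_ifs <;> simp [negVar_X, Fin.succ_inj, hj]

theorem negVar_succ_signProd (i : Fin n) : negVar i.succ (signProd R n) = signProd R n := by
  have hflip : Function.Involutive fun ε : Fin n → Bool => Function.update ε i (!ε i) :=
    fun ε => by simp
  rw [signProd, map_prod]
  simp only [map_sub, negVar_X, if_neg (Fin.succ_ne_zero i).symm, negVar_succ_signedSum]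
  exact Fintype.prod_equiv hflip.toPerm _ _ fun _ => rfl

theorem exists_expand_eq_signProd [IsDomain R] [CharZero R] (hn : n ≠ 0) :
    ∃ Q, expand 2 Q = signProd R n := by
  refine exists_expand_eq_of_forall_dvd fun d hd k => (?_ : Even (d k)).two_dvd
  have hsucc (i : Fin n) : Even (d i.succ) :=
    even_of_negVar_eq_self (negVar_succ_signProd R i) hd
  cases k using Fin.cases with
  | succ i => exact hsucc i
  | zero =>
    have hdeg : d 0 + ∑ i : Fin n, d i.succ = 2 ^ n := by
      rw [← Fin.sum_univ_succ, ← Finsupp.degree_eq_sum, Finsupp.degree_eq_weight_one]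
      exact isHomogeneous_signProd R (mem_support_iff.mp hd)
    have := (Nat.even_pow' hn).mpr even_two
    rw [← hdeg, Nat.even_add] at this
    exact this.mpr (Finset.even_sum _ fun i _ => hsucc i)

variable {R}

theorem IsHomogeneous.of_expand_eq_signProd {Q : MvPolynomial (Fin (n + 1)) R} (hn : n ≠ 0)
    (hQ : expand 2 Q = signProd R n) : Q.IsHomogeneous (2 ^ (n - 1)) := by
  refine IsHomogeneous.of_expand two_ne_zero ?_
  rw [hQ, ← pow_succ', Nat.sub_add_cancel (Nat.one_le_iff_ne_zero.mpr hn)]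
  exact isHomogeneous_signProd R

theorem coeff_single_of_expand_eq_signProd {Q : MvPolynomial (Fin (n + 1)) R} (hn : n ≠ 0)
    (hQ : expand 2 Q = signProd R n) (k : Fin (n + 1)) :
    Q.coeff (Finsupp.single k (2 ^ (n - 1))) = eval (Pi.single k 1) (signProd R n) := by
  have hsq : (Pi.single k 1 : Fin (n + 1) → R) ^ 2 = Pi.single k 1 := by
    ext j; rcases eq_or_ne j k with rfl | h <;> simp [*]
  rw [(IsHomogeneous.of_expand_eq_signProd hn hQ).coeff_single_eq_eval, ← hQ, eval_expand, hsq]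

theorem sum_eval_finSuccEquiv_coeff_of_expand_eq_signProd {Q : MvPolynomial (Fin (n + 1)) R}
    (hn : n ≠ 0) (hQ : expand 2 Q = signProd R n) (t : Fin n → R) (δ : R) :
    ∑ j ∈ range (2 ^ (n - 1) + 1),
        eval (fun i => t i ^ 2) ((finSuccEquiv R n Q).coeff (2 ^ (n - 1) - j)) *
          δ ^ (2 * (2 ^ (n - 1) - j)) =
      ∏ ε : Fin n → Bool, (δ - ∑ j, if ε j then t j else -t j) := by
  have hsq : (Fin.cons δ t : Fin (n + 1) → R) ^ 2 = Fin.cons (δ ^ 2) fun i => t i ^ 2 := by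
    ext j; cases j using Fin.cases <;> simp
  simp only [pow_mul]
  rw [← (IsHomogeneous.of_expand_eq_signProd hn hQ).eval_cons_eq_sum, ← hsq, ← eval_expand,
    hQ, eval_signProd]
  simp

end SquareElimination

open SquareElimination

/-- Square-elimination lemma: for `n ≥ 2` there is a family of polynomials
`H_{n,j}` in `n` variables (with `H_{n,0} = 1`, each `H_{n,j}` homogeneous of
degree `j`, and the top one `H_{n,2^{n-1}}` monic of total degree `2^{n-1}`)
such that the polynomial
`Q = Σ_{j=0}^{2^{n-1}} H_{n,j}(s₁,…,sₙ) · δ^{2(2^{n-1}-j)}`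
(in `n+1` variables, involving only even powers of δ) is non-zero and vanishes
at `(t₁², …, tₙ², δ)` whenever `t₁ + ⋯ + tₙ = δ`. -/
theorem square_elimination_family (n : ℕ) (hn : 2 ≤ n) :
    ∃ H : ℕ → MvPolynomial (Fin n) ℝ,
      H 0 = 1 ∧
      (∀ j, 1 ≤ j → j ≤ 2 ^ (n - 1) → (H j).IsHomogeneous j) ∧
      (H (2 ^ (n - 1))).totalDegree = 2 ^ (n - 1) ∧
      (∃ d : Fin n →₀ ℕ, (d.sum fun _ e => e) = 2 ^ (n - 1) ∧
        (H (2 ^ (n - 1))).coeff d = 1) ∧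
      (∑ j ∈ Finset.range (2 ^ (n - 1) + 1),
          (MvPolynomial.rename (Fin.castSucc) (H j)) *
            (MvPolynomial.X (Fin.last n) : MvPolynomial (Fin (n + 1)) ℝ) ^
              (2 * (2 ^ (n - 1) - j))) ≠ 0 ∧
      ∀ (t : Fin n → ℝ) (δ : ℝ), (∑ i, t i) = δ →
        ∑ j ∈ Finset.range (2 ^ (n - 1) + 1),
          MvPolynomial.eval (fun i => (t i) ^ 2) (H j) * δ ^ (2 * (2 ^ (n - 1) - j)) = 0 := by
  have hn0 : n ≠ 0 := by omega
  obtain ⟨Q, hQ⟩ := exists_expand_eq_signProd ℝ hn0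
  have hQhom := IsHomogeneous.of_expand_eq_signProd hn0 hQ
  set H : ℕ → MvPolynomial (Fin n) ℝ := fun j => (finSuccEquiv ℝ n Q).coeff (2 ^ (n - 1) - j)
  have hH (j : ℕ) (hj : j ≤ 2 ^ (n - 1)) : (H j).IsHomogeneous j :=
    hQhom.finSuccEquiv_coeff_isHomogeneous _ _ (by omega)
  have key := sum_eval_finSuccEquiv_coeff_of_expand_eq_signProd hn0 hQ
  have hH0 : H 0 = 1 := by
    rw [totalDegree_eq_zero_iff_eq_C.mp (Nat.le_zero.mp (hH 0 (Nat.zero_le _)).totalDegree_le)]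
    simp only [H, Nat.sub_zero, finSuccEquiv_coeff_coeff]
    rw [Finsupp.cons_zero_eq_single_zero, coeff_single_of_expand_eq_signProd hn0 hQ,
      eval_piSingle_zero_signProd, C_1]
  have : Nontrivial (Fin n) := Fin.nontrivial_iff_two_le.mpr hn
  obtain ⟨i₀⟩ := Fin.pos_iff_nonempty.mp (by omega : 0 < n)
  have htop : (H (2 ^ (n - 1))).coeff (Finsupp.single i₀ (2 ^ (n - 1))) = 1 := by
    simp only [H, Nat.sub_self, finSuccEquiv_coeff_coeff]
    rw [Finsupp.cons_zero_single_eq_single_succ, coeff_single_of_expand_eq_signProd hn0 hQ,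
      eval_piSingle_succ_signProd, Fintype.prod_ite_neg_one_eq_one]
  refine ⟨H, hH0, fun j _ hj => hH j hj,
    (hH _ le_rfl).totalDegree (ne_zero_iff.mpr ⟨_, htop ▸ one_ne_zero⟩),
    ⟨_, Finsupp.sum_single_index rfl, htop⟩, fun hQ0 => ?_, fun t δ hδ => ?_⟩
  · -- At `(0, …, 0, 1)` the left side takes the value `P(1, 0) = 1`.
    have h1 := key 0 1
    have := congrArg (eval (Fin.snoc (0 : Fin n → ℝ) 1)) hQ0
    simp [eval_rename, Function.comp_def] at this h1
    exact one_ne_zero (h1.symm.trans this)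
  · rw [key]
    exact prod_eq_zero (mem_univ fun _ => true) (by simp [hδ])
end

section
/- If t₁ + ⋯ + tₙ = δ (reals, n ≥ 2), then there exists a non-zero polynomial P in n variables with real coefficients such that P(t₁², …, tₙ²) = 0 whenever the linear relation holds, where in P one of the squared variables may be taken to be δ² itself; i.e., any linear dependence among real numbers forces a non-trivial polynomial dependence among their squares. -/
/-!
The `n + 1` polynomials `X₁², …, Xₙ², (X₁ + ⋯ + Xₙ)²` live in `ℝ[X₁, …, Xₙ]`, whose transcendence
degree over `ℝ` is `n`, so they are algebraically dependent. A non-zero polynomial `P` witnessing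
this vanishes identically at them; evaluating at `t` turns that identity into
`P(t₁², …, tₙ², δ²) = 0`.
-/

open MvPolynomial

theorem MvPolynomial.not_algebraicIndependent_of_card_lt {R σ ι : Type*}
    [CommRing R] [IsDomain R] [Fintype σ] [Fintype ι] (f : ι → MvPolynomial σ R)
    (h : Fintype.card σ < Fintype.card ι) : ¬AlgebraicIndependent R f := by
  intro hf
  have := hf.lift_cardinalMk_le_trdeg
  simp only [trdeg_of_isDomain, Cardinal.mk_fintype, Cardinal.lift_natCast,
    Nat.cast_le] at this
  omega

theorem MvPolynomial.exists_ne_zero_aeval_eq_zero_of_card_lt {R σ ι : Type*}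
    [CommRing R] [IsDomain R] [Fintype σ] [Fintype ι] (f : ι → MvPolynomial σ R)
    (h : Fintype.card σ < Fintype.card ι) : ∃ P : MvPolynomial ι R, P ≠ 0 ∧ aeval f P = 0 := by
  have := not_algebraicIndependent_of_card_lt f h
  rw [algebraicIndependent_iff] at this
  push Not at this
  obtain ⟨P, hP, hne⟩ := this
  exact ⟨P, hne, hP⟩

theorem square_elimination_general (n : ℕ) :
    ∃ P : MvPolynomial (Fin (n + 1)) ℝ, P ≠ 0 ∧
      ∀ (t : Fin n → ℝ) (δ : ℝ), (∑ i, t i) = δ →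
        MvPolynomial.eval (Fin.snoc (fun i => (t i) ^ 2) (δ ^ 2)) P = 0 := by
  let squares : Fin (n + 1) → MvPolynomial (Fin n) ℝ :=
    Fin.snoc (fun i => X i ^ 2) ((∑ i, X i) ^ 2)
  obtain ⟨P, hP, hsq⟩ := exists_ne_zero_aeval_eq_zero_of_card_lt squares (by simp)
  refine ⟨P, hP, fun t δ hδ => ?_⟩
  have heval : (fun i => aeval t (squares i)) = Fin.snoc (fun i => t i ^ 2) (δ ^ 2) := by
    rw [← Function.comp_def, Fin.comp_snoc]
    simp [← hδ, Function.comp_def]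
  rw [← aeval_eq_eval, ← heval, ← comp_aeval_apply, hsq, map_zero]

/-- A linear relation `t₁ + ⋯ + tₙ = δ` among real numbers forces a non-trivial
polynomial dependence among the squares `t₁², …, tₙ², δ²`. -/
theorem square_elimination (n : ℕ) (hn : 2 ≤ n) :
    ∃ P : MvPolynomial (Fin (n + 1)) ℝ, P ≠ 0 ∧
      ∀ (t : Fin n → ℝ) (δ : ℝ), (∑ i, t i) = δ →
        MvPolynomial.eval (Fin.snoc (fun i => (t i) ^ 2) (δ ^ 2)) P = 0 :=
  square_elimination_general n
end

section
/- Let m ≥ 1, let r₁, …, r_m be distinct points of ℝ³, and let α₁, …, α_m be real numbers. If the function f(x) = Σ_{j=1}^m α_j / |x − r_j| is equal to a constant c on ℝ³ ∖ {r₁,…,r_m}, then all α_j = 0 and c = 0. -/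
open Filter Topology

/-- A finite sum of Coulomb potentials centered at distinct nuclei is never a
nonzero constant: if `Σⱼ αⱼ/‖x − rⱼ‖ = c` off the singular set, then all
`αⱼ = 0` and `c = 0`. -/
theorem coulomb_sum_eq_const_iff_zero (m : ℕ) (hm : 1 ≤ m)
    (r : Fin m → EuclideanSpace ℝ (Fin 3)) (hr : Function.Injective r)
    (α : Fin m → ℝ) (c : ℝ)
    (h : ∀ x ∉ Set.range r, ∑ j, α j / ‖x - r j‖ = c) :
    (∀ j, α j = 0) ∧ c = 0 := by
  have hα : ∀ k, α k = 0 := by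
    intro k
    set e : EuclideanSpace ℝ (Fin 3) := EuclideanSpace.single 0 1 with he
    have hne : ‖e‖ = 1 := by simp [he]
    set x : ℕ → EuclideanSpace ℝ (Fin 3) :=
      fun n => r k + ((n : ℝ) + 1)⁻¹ • e with hxdef
    have hpos : ∀ n : ℕ, (0:ℝ) < ((n : ℝ) + 1)⁻¹ := fun n => by positivity
    have hdist : ∀ n, ‖x n - r k‖ = ((n : ℝ) + 1)⁻¹ := by
      intro n
      simp only [hxdef, add_sub_cancel_left, norm_smul, hne, mul_one, Real.norm_eq_abs]
      rw [abs_of_pos (hpos n)]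
    have hinv : Tendsto (fun n : ℕ => ((n : ℝ) + 1)⁻¹) atTop (nhds 0) :=
      tendsto_one_div_add_atTop_nhds_zero_nat.congr (by intro n; rw [one_div])
    have htend : Tendsto x atTop (nhds (r k)) := by
      have : Tendsto (fun n : ℕ => r k + ((n : ℝ) + 1)⁻¹ • e) atTop
          (nhds (r k + (0:ℝ) • e)) :=
        tendsto_const_nhds.add (hinv.smul_const e)
      simpa using this
    have hev : ∀ᶠ n in atTop, x n ∉ Set.range r := by
      have : ∀ᶠ n in atTop, ∀ j, x n ≠ r j := by
        rw [Filter.eventually_all]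
        intro j
        by_cases hj : j = k
        · subst hj
          refine Filter.Eventually.of_forall fun n hx => ?_
          have := hdist n
          rw [hx, sub_self, norm_zero] at this
          exact (hpos n).ne this
        · have hopen : {y : EuclideanSpace ℝ (Fin 3) | y ≠ r j} ∈ nhds (r k) := by
            refine IsOpen.mem_nhds isOpen_ne ?_
            exact fun hh => hj (hr hh).symm
          exact htend.eventually hopen
      filter_upwards [this] with n hn hmem
      obtain ⟨j, hj⟩ := hmem
      exact hn j hj.symm
    set L : ℝ := ∑ j ∈ Finset.univ.erase k, α j / ‖r k - r j‖ with hL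
    have hg : Tendsto (fun n => ∑ j ∈ Finset.univ.erase k, α j / ‖x n - r j‖)
        atTop (nhds L) := by
      refine tendsto_finset_sum _ fun j hj => ?_
      have hjk : j ≠ k := (Finset.mem_erase.mp hj).1
      have hnorm : Tendsto (fun n => ‖x n - r j‖) atTop (nhds ‖r k - r j‖) :=
        ((continuous_id.sub continuous_const).norm.continuousAt.tendsto).comp htend
      have hne0 : ‖r k - r j‖ ≠ 0 := by
        simp only [norm_ne_zero_iff, sub_ne_zero]
        exact fun hh => hjk (hr hh).symm
      exact tendsto_const_nhds.div hnorm hne0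
    have key : ∀ᶠ n in atTop, α k = (c - ∑ j ∈ Finset.univ.erase k, α j / ‖x n - r j‖) * ((n:ℝ)+1)⁻¹ := by
      filter_upwards [hev] with n hn
      have heq := h (x n) hn
      rw [← Finset.add_sum_erase _ _ (Finset.mem_univ k)] at heq
      rw [hdist n, div_eq_mul_inv, inv_inv] at heq
      have h1 : ((n:ℝ)+1) ≠ 0 := by positivity
      have h2 : α k * ((n:ℝ)+1)
          = c - ∑ j ∈ Finset.univ.erase k, α j / ‖x n - r j‖ := by linarith
      rw [← h2, mul_assoc, mul_inv_cancel₀ h1, mul_one]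
    have hrhs : Tendsto (fun n => (c - ∑ j ∈ Finset.univ.erase k, α j / ‖x n - r j‖) * ((n:ℝ)+1)⁻¹)
        atTop (nhds ((c - L) * 0)) := (tendsto_const_nhds.sub hg).mul hinv
    have := tendsto_nhds_unique (tendsto_const_nhds.congr' key) hrhs
    simpa using this
  refine ⟨hα, ?_⟩
  have einj : Function.Injective
      (fun t : ℝ => t • (EuclideanSpace.single 0 1 : EuclideanSpace ℝ (Fin 3))) := by
    apply smul_left_injective
    intro hh
    have : ‖(EuclideanSpace.single 0 1 : EuclideanSpace ℝ (Fin 3))‖ = 1 := by simp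
    rw [hh] at this; simp at this
  obtain ⟨x, hx1, hx⟩ :=
    ((Set.infinite_range_of_injective einj).diff (Set.finite_range r)).nonempty
  have := h x hx
  simp [hα] at this
  exact this.symm
end

section
/- Let H₀ be a symmetric operator (quadratic form) on a Hilbert space, and for potentials v, v' let E(v) = inf{⟨Ψ, (H₀ + V)Ψ⟩ : ‖Ψ‖ = 1} with V the multiplication operator by Σᵢ v(xᵢ). Suppose Ψ_v and Ψ_{v'} are normalized minimizers for v and v' respectively, and the single-particle densities satisfy ρ^{Ψ_v} = ρ^{Ψ_{v'}}. Then E(v') = E(v) − ∫ ρ_v (v − v'), and Ψ_{v'} is also a minimizer for the potential v. -/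
open MeasureTheory

/-- Variational lemma: if `Ψ_v`, `Ψ_{v'}` are normalized minimizers of the
energies `E(w)(Ψ) = ⟨Ψ, H₀Ψ⟩ + ∫ ρ^Ψ w` for potentials `v`, `v'`, and their
densities coincide, then `E(v') = E(v) − ∫ ρ_v (v − v')` and `Ψ_{v'}` is also a
minimizer for the potential `v`. -/
theorem variational_lemma {W : Type*}
    (Q0 : W → ℝ)                                     -- the quadratic form ⟨Ψ, H₀Ψ⟩
    (ρ : W → EuclideanSpace ℝ (Fin 3) → ℝ)           -- single-particle density
    (Energy : (EuclideanSpace ℝ (Fin 3) → ℝ) → W → ℝ)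
    (hE : ∀ (w : EuclideanSpace ℝ (Fin 3) → ℝ) (Ψ : W),
      Energy w Ψ = Q0 Ψ + ∫ x, ρ Ψ x * w x)
    (v v' : EuclideanSpace ℝ (Fin 3) → ℝ)
    (hInt : ∀ (Ψ : W), Integrable (fun x => ρ Ψ x * v x) volume ∧
      Integrable (fun x => ρ Ψ x * v' x) volume)
    (Ψv Ψv' : W)
    (hmin : ∀ Ψ : W, Energy v Ψv ≤ Energy v Ψ)
    (hmin' : ∀ Ψ : W, Energy v' Ψv' ≤ Energy v' Ψ)
    (hρ : ρ Ψv = ρ Ψv') :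
    Energy v' Ψv' = Energy v Ψv - ∫ x, ρ Ψv x * (v x - v' x) ∧
    (∀ Ψ : W, Energy v Ψv' ≤ Energy v Ψ) := by
  have hdiff : ∀ Ψ : W, Energy v Ψ - Energy v' Ψ = ∫ x, ρ Ψ x * (v x - v' x) := by
    intro Ψ
    have h1 := (hInt Ψ).1
    have h2 := (hInt Ψ).2
    rw [hE v Ψ, hE v' Ψ]
    have : (∫ x, ρ Ψ x * (v x - v' x)) = (∫ x, ρ Ψ x * v x) - ∫ x, ρ Ψ x * v' x := by
      rw [← integral_sub h1 h2]
      congr 1; ext x; ring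
    rw [this]; ring
  set I : ℝ := ∫ x, ρ Ψv x * (v x - v' x) with hI
  have hdv : Energy v Ψv - Energy v' Ψv = I := hdiff Ψv
  have hdv' : Energy v Ψv' - Energy v' Ψv' = I := by rw [hdiff Ψv', ← hρ]
  have h1 : Energy v Ψv ≤ Energy v Ψv' := hmin Ψv'
  have h2 : Energy v' Ψv' ≤ Energy v' Ψv := hmin' Ψv
  have key : Energy v' Ψv' = Energy v Ψv - I := by linarith
  refine ⟨key, fun Ψ => ?_⟩
  have : Energy v Ψv' = Energy v Ψv := by linarith
  rw [this]; exact hmin Ψ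
end

section
/- For any two distinct potentials v, v' in the Coulomb class 𝕍_C = {x ↦ −Σ_{j=1}^M Z_j e²/|x − r_j| : Z_j ∈ ℝ, r_j ∈ ℝ³, M ≥ 1}, the difference v − v' is not equal to any constant function on the common domain of definition. -/
/-- `v` is a Coulomb potential with singular set `S`: for some `M ≥ 1`, charges
`Z_j` and distinct centers `r_j`, we have `v(x) = −Σⱼ Zⱼ e²/‖x − rⱼ‖` off `S`
(the charge factor `e²` is absorbed into the `Zⱼ`). -/
def IsCoulombPotential (v : EuclideanSpace ℝ (Fin 3) → ℝ)
    (S : Set (EuclideanSpace ℝ (Fin 3))) : Prop :=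
  ∃ M : ℕ, 1 ≤ M ∧ ∃ (Z : Fin M → ℝ) (r : Fin M → EuclideanSpace ℝ (Fin 3)),
    Function.Injective r ∧ S = Set.range r ∧
    ∀ x ∉ S, v x = -∑ j, Z j / ‖x - r j‖

/-- Within the Coulomb class there is no additive-constant ambiguity: two
Coulomb potentials which differ somewhere on their common domain cannot differ
by a constant on that domain. -/
theorem coulomb_potentials_no_constant_ambiguity
    (v v' : EuclideanSpace ℝ (Fin 3) → ℝ)
    (S S' : Set (EuclideanSpace ℝ (Fin 3)))
    (hv : IsCoulombPotential v S) (hv' : IsCoulombPotential v' S')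
    (hne : ∃ x ∉ S ∪ S', v x ≠ v' x) :
    ∀ c : ℝ, ¬ (∀ x ∉ S ∪ S', v x - v' x = c) := by
  intro c hc
  obtain ⟨x₀, hx₀, hx₀ne⟩ := hne
  obtain ⟨M, hM, Z, r, hr, hS, hvx⟩ := hv
  obtain ⟨M', hM', Z', r', hr', hS', hvx'⟩ := hv'
  have hc0 : c ≠ 0 := by
    intro h
    apply hx₀ne
    have := hc x₀ hx₀
    rw [h] at this
    linarith
  set e : EuclideanSpace ℝ (Fin 3) := EuclideanSpace.single 0 1 with he_def
  have he : ‖e‖ = 1 := by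
    simp [he_def, EuclideanSpace.norm_single]
  have he0 : e ≠ 0 := by
    intro h; rw [h] at he; simp at he
  -- distance to a fixed point along the ray grows
  have key : ∀ (p : EuclideanSpace ℝ (Fin 3)) (a : ℝ),
      Filter.Tendsto (fun t : ℝ => a / ‖t • e - p‖) Filter.atTop (nhds 0) := by
    intro p a
    apply Filter.Tendsto.div_atTop (tendsto_const_nhds)
    apply Filter.tendsto_atTop_mono (f := fun t : ℝ => t + -‖p‖)
    · intro t
      calc t + -‖p‖ ≤ ‖t • e‖ - ‖p‖ := by
            rw [norm_smul, he, mul_one]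
            have := le_abs_self t
            simp only [Real.norm_eq_abs]
            linarith
        _ ≤ ‖t • e - p‖ := norm_sub_norm_le _ _
    · exact Filter.tendsto_atTop_add_const_right _ _ Filter.tendsto_id
  -- the difference function along the ray
  have hF : Filter.Tendsto
      (fun t : ℝ => (-∑ j, Z j / ‖t • e - r j‖) - (-∑ j, Z' j / ‖t • e - r' j‖))
      Filter.atTop (nhds 0) := by
    have h1 : Filter.Tendsto (fun t : ℝ => ∑ j, Z j / ‖t • e - r j‖)
        Filter.atTop (nhds 0) := by
      have := tendsto_finset_sum (Finset.univ : Finset (Fin M))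
        (fun j _ => key (r j) (Z j))
      simpa using this
    have h2 : Filter.Tendsto (fun t : ℝ => ∑ j, Z' j / ‖t • e - r' j‖)
        Filter.atTop (nhds 0) := by
      have := tendsto_finset_sum (Finset.univ : Finset (Fin M'))
        (fun j _ => key (r' j) (Z' j))
      simpa using this
    have := (h1.neg).sub (h2.neg)
    simpa using this
  -- the bad set of parameters is finite
  have hfin : (Set.range r ∪ Set.range r').Finite :=
    (Set.finite_range r).union (Set.finite_range r')
  have hBfin : {t : ℝ | t • e ∈ S ∪ S'}.Finite := by
    have hinj : Function.Injective (fun t : ℝ => t • e) := smul_left_injective ℝ he0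
    have : {t : ℝ | t • e ∈ S ∪ S'} = (fun t : ℝ => t • e) ⁻¹' (S ∪ S') := rfl
    rw [this, hS, hS']
    exact Set.Finite.preimage hinj.injOn hfin
  obtain ⟨b, hb⟩ := hBfin.bddAbove
  have hev : ∀ᶠ t : ℝ in Filter.atTop,
      c = (-∑ j, Z j / ‖t • e - r j‖) - (-∑ j, Z' j / ‖t • e - r' j‖) := by
    filter_upwards [Filter.eventually_gt_atTop b] with t ht
    have hts : t • e ∉ S ∪ S' := by
      intro hmem
      exact absurd (hb hmem) (not_le.mpr ht)
    have h1 := hc (t • e) hts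
    rw [hvx _ (fun h => hts (Or.inl h)), hvx' _ (fun h => hts (Or.inr h))] at h1
    exact h1.symm
  have : Filter.Tendsto (fun _ : ℝ => c) Filter.atTop (nhds 0) :=
    hF.congr' (Filter.EventuallyEq.symm hev)
  exact hc0 (tendsto_nhds_unique tendsto_const_nhds this)
end

section
/- Hohenberg–Kohn theorem for Coulomb systems (abstract form): Let 𝕍_C be the class of Coulomb potentials on ℝ³ and suppose that for each v ∈ 𝕍_C with a normalized ground state Ψ_v of H_v = H₀ + Σᵢ v(xᵢ), the conclusions of the variational lemma hold (equal densities ρ_v = ρ_{v'} imply (Σᵢ(v'−v)(xᵢ) − ΔE)Ψ_v = 0 a.e.). Then the map v ↦ ρ_v from 𝕍_C to ground-state densities is injective: ρ_v = ρ_{v'} implies v = v' (with no additive-constant ambiguity). -/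
/-!
The difference of two Coulomb potentials is again a potential of finitely many point charges,
`W x = ∑ₚ Aₚ / ‖x - p‖`. If some charge `A p₀` is nonzero, then on almost every ray from `p₀` the
function `s ↦ W (p₀ + s u)` is real analytic on `(0, ∞)` and blows up as `s → 0⁺`, so each of its
level sets is countable; in polar coordinates around `p₀` every level set of `W` is therefore
Lebesgue-null. By Fubini the same holds for `X ↦ ∑ᵢ W (Xᵢ)` on `(ℝ³)ᴺ`, so the variational
identity `(∑ᵢ W (Xᵢ) - ΔE) Ψ_v = 0` forces `Ψ_v = 0` almost everywhere, contradicting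
`‖Ψ_v‖ = 1`. Hence all charges of the difference vanish and the two potentials agree.
-/

open MeasureTheory

/-- `v` is a Coulomb potential with singular set `S`. -/
def IsCoulombPot (v : EuclideanSpace ℝ (Fin 3) → ℝ)
    (S : Set (EuclideanSpace ℝ (Fin 3))) : Prop :=
  ∃ M : ℕ, 1 ≤ M ∧ ∃ (Z : Fin M → ℝ) (r : Fin M → EuclideanSpace ℝ (Fin 3)),
    Function.Injective r ∧ S = Set.range r ∧
    ∀ x ∉ S, v x = -∑ j, Z j / ‖x - r j‖

open Set Filter Topology Metric Module
open scoped ContDiff Pointwise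

local notation "ℝ³" => EuclideanSpace ℝ (Fin 3)

/-- A charge sitting at `x` itself contributes the junk value `0`, since `‖0‖⁻¹ = 0`. -/
noncomputable def pointChargePotential {E : Type*} [NormedAddCommGroup E] (A : E →₀ ℝ)
    (x : E) : ℝ :=
  Finsupp.linearCombination ℝ (fun p => ‖x - p‖⁻¹) A

section PointCharges

variable {E : Type*} [NormedAddCommGroup E]

theorem pointChargePotential_zero (x : E) : pointChargePotential 0 x = 0 :=
  map_zero _

theorem pointChargePotential_sub (A B : E →₀ ℝ) (x : E) :
    pointChargePotential (A - B) x = pointChargePotential A x - pointChargePotential B x :=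
  map_sub _ A B

theorem pointChargePotential_eq_sum (A : E →₀ ℝ) (x : E) :
    pointChargePotential A x = ∑ p ∈ A.support, A p * ‖x - p‖⁻¹ := by
  simp [pointChargePotential, Finsupp.linearCombination_apply, Finsupp.sum]

theorem measurable_pointChargePotential [MeasurableSpace E] [OpensMeasurableSpace E]
    (A : E →₀ ℝ) : Measurable (pointChargePotential A) := by
  simp_rw [funext (pointChargePotential_eq_sum A)]
  exact Finset.measurable_sum _ fun p _ =>
    measurable_const.mul (continuous_id.sub continuous_const).norm.measurable.inv

end PointCharges

theorem IsCoulombPot.finite {v : ℝ³ → ℝ} {S : Set ℝ³} (h : IsCoulombPot v S) : S.Finite := by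
  obtain ⟨M, -, Z, r, -, rfl, -⟩ := h
  exact finite_range r

theorem IsCoulombPot.exists_eq_pointChargePotential {v : ℝ³ → ℝ} {S : Set ℝ³}
    (h : IsCoulombPot v S) : ∃ A : ℝ³ →₀ ℝ, ∀ x ∉ S, v x = pointChargePotential A x := by
  obtain ⟨M, -, Z, r, -, -, hv⟩ := h
  refine ⟨∑ j, Finsupp.single (r j) (-Z j), fun x hx => ?_⟩
  simp [hv x hx, pointChargePotential, div_eq_mul_inv]

namespace MeasureTheory

variable {E : Type*} [NormedAddCommGroup E] [NormedSpace ℝ E] [FiniteDimensional ℝ E]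
  [MeasurableSpace E] [BorelSpace E] (μ : Measure E) [μ.IsAddHaarMeasure]

theorem Measure.toSphere_singleton (hE : 1 < finrank ℝ E) (u : sphere (0 : E) 1) :
    μ.toSphere {u} = 0 := by
  rw [Measure.toSphere_apply' _ (measurableSet_singleton u), image_singleton]
  have hsub : Ioo (0 : ℝ) 1 • ({(u : E)} : Set E) ⊆ (ℝ ∙ (u : E)) := by
    rw [Set.smul_singleton]
    rintro _ ⟨r, -, rfl⟩
    exact Submodule.smul_mem _ r (Submodule.mem_span_singleton_self _)
  have hproper : (ℝ ∙ (u : E)) ≠ ⊤ := fun h => by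
    have := finrank_span_singleton (K := ℝ) (ne_of_mem_sphere u.2 one_ne_zero)
    rw [h, finrank_top] at this
    omega
  rw [measure_mono_null hsub (Measure.addHaar_submodule μ _ hproper), mul_zero]

theorem Measure.toSphere_finite (hE : 1 < finrank ℝ E) {s : Set (sphere (0 : E) 1)}
    (hs : s.Finite) : μ.toSphere s = 0 :=
  haveI : NullSingletonClass μ.toSphere := ⟨μ.toSphere_singleton hE⟩
  hs.measure_zero _

theorem measure_eq_zero_of_ae_toSphere_ray [Nontrivial E] {Z : Set E} (hZ : MeasurableSet Z)
    (h : ∀ᵐ u : sphere (0 : E) 1 ∂μ.toSphere,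
      volume ({s : ℝ | s • (u : E) ∈ Z} ∩ Ioi 0) = 0) :
    μ Z = 0 := by
  refine measure_mono_null (subset_union_left.trans (sdiff_union_self (s := Z) (t := {0})).ge)
    (measure_union_null ?_ (measure_singleton 0))
  set C : Set (sphere (0 : E) 1 × Ioi (0 : ℝ)) := {z | (z.2 : ℝ) • (z.1 : E) ∈ Z}
  have hC : MeasurableSet C :=
    hZ.preimage ((continuous_subtype_val.comp continuous_snd).smul
      (continuous_subtype_val.comp continuous_fst)).measurable
  have hpolar : (Subtype.val ⁻¹' Z : Set ({0}ᶜ : Set E)) = homeomorphUnitSphereProd E ⁻¹' C := by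
    ext u
    simp [C, smul_inv_smul₀ (norm_ne_zero_iff.2 u.2)]
  rw [sdiff_eq_compl_inter, ← Subtype.image_preimage_coe,
    ← comap_subtype_coe_apply (measurableSet_singleton (0 : E)).compl, hpolar,
    (μ.measurePreserving_homeomorphUnitSphereProd).measure_preimage hC.nullMeasurableSet,
    Measure.measure_prod_null hC]
  filter_upwards [h] with u hu
  refine withDensity_absolutelyContinuous _ _ ?_
  rw [comap_subtype_coe_apply measurableSet_Ioi]
  refine measure_mono_null ?_ hu
  rintro _ ⟨s, hs, rfl⟩
  exact ⟨hs, s.2⟩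

theorem ae_pi_forall_notMem {ι α : Type*} [Fintype ι] [MeasurableSpace α] {ν : Measure α}
    [SigmaFinite ν] {S : Set α} (hS : ν S = 0) :
    ∀ᵐ X ∂Measure.pi (fun _ : ι => ν), ∀ i, X i ∉ S :=
  ae_all_iff.2 fun i =>
    (Measure.tendsto_eval_ae_ae (i := i)).eventually (measure_eq_zero_iff_ae_notMem.1 hS)

theorem measure_pi_sum_comp_eq_null {α : Type*} [MeasurableSpace α] {ν : Measure α}
    [SigmaFinite ν] {w : α → ℝ} (hw : Measurable w) (hlev : ∀ t, ν {x | w x = t} = 0) {N : ℕ}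
    (hN : 1 ≤ N) (c : ℝ) : Measure.pi (fun _ : Fin N => ν) {X | ∑ i, w (X i) = c} = 0 := by
  obtain ⟨n, rfl⟩ : ∃ n, N = n + 1 := ⟨N - 1, by omega⟩
  set B : Set (α × (Fin n → α)) := {p | w p.1 + ∑ j, w (p.2 j) = c}
  have hB : MeasurableSet B :=
    measurableSet_eq_fun ((hw.comp measurable_fst).add
      (Finset.measurable_sum _ fun j _ => hw.comp ((measurable_pi_apply j).comp measurable_snd)))
      measurable_const
  have hsplit : {X : Fin (n + 1) → α | ∑ i, w (X i) = c}
      = MeasurableEquiv.piFinSuccAbove (fun _ => α) 0 ⁻¹' B := by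
    ext X
    simp [B, Fin.sum_univ_succ, MeasurableEquiv.piFinSuccAbove_apply, Fin.tail]
  rw [hsplit, (measurePreserving_piFinSuccAbove (fun _ => ν) 0).measure_preimage
    hB.nullMeasurableSet, Measure.prod_apply_symm hB]
  refine (lintegral_congr fun y => ?_).trans lintegral_zero
  convert hlev (c - ∑ j, w (y j)) using 2
  ext x
  simp [B, eq_sub_iff_add_eq]

end MeasureTheory

section Rays

variable {E : Type*} [NormedAddCommGroup E] [InnerProductSpace ℝ E]

theorem contDiffAt_pointChargePotential {A : E →₀ ℝ} {x : E} (hx : x ∉ A.support)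
    {n : WithTop ℕ∞} : ContDiffAt ℝ n (pointChargePotential A) x := by
  simp_rw [funext (pointChargePotential_eq_sum A)]
  refine ContDiffAt.sum fun p hp => contDiffAt_const.mul ?_
  have hxp : x - p ≠ 0 := sub_ne_zero.2 fun h => hx (h ▸ hp)
  exact ((contDiffAt_norm ℝ hxp).comp x (by fun_prop)).inv (norm_ne_zero_iff.2 hxp)

theorem exists_pos_pointChargePotential_ray_ne {A : E →₀ ℝ} {p₀ : E} (hA : A p₀ ≠ 0) {u : E}
    (hu : ‖u‖ = 1) (t : ℝ) : ∃ s > (0 : ℝ), pointChargePotential A (p₀ + s • u) ≠ t := by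
  by_contra! h
  set g := fun s : ℝ => pointChargePotential (A.erase p₀) (p₀ + s • u)
  have hg : ContinuousAt g 0 :=
    ((contDiffAt_pointChargePotential (x := p₀) (n := 0) (by simp)).continuousAt.comp_of_eq
      (by fun_prop) (by simp))
  have hsplit : ∀ s > (0 : ℝ), pointChargePotential A (p₀ + s • u) = A p₀ * s⁻¹ + g s := by
    intro s hs
    conv_lhs => rw [← Finsupp.single_add_erase p₀ A]
    simp [g, pointChargePotential, norm_smul, hu, abs_of_pos hs]
  have hinv : Tendsto (fun s : ℝ => s⁻¹) (𝓝[>] 0) (𝓝 ((A p₀)⁻¹ * (t - g 0))) := by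
    refine (((tendsto_const_nhds.sub hg.tendsto).const_mul _).mono_left
      nhdsWithin_le_nhds).congr' ?_
    filter_upwards [self_mem_nhdsWithin] with s hs
    rw [← h s hs, hsplit s hs]
    field_simp
    ring
  exact not_tendsto_nhds_of_tendsto_atTop tendsto_inv_nhdsGT_zero _ hinv

theorem volume_pointChargePotential_ray_eq_null {A : E →₀ ℝ} {p₀ : E} (hA : A p₀ ≠ 0) {u : E}
    (hu : ‖u‖ = 1) (hray : ∀ s > (0 : ℝ), p₀ + s • u ∉ A.support) (t : ℝ) :
    volume ({s : ℝ | pointChargePotential A (p₀ + s • u) = t} ∩ Ioi 0) = 0 := by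
  have han : AnalyticOnNhd ℝ (fun s : ℝ => pointChargePotential A (p₀ + s • u)) (Ioi 0) :=
    fun s hs => ((contDiffAt_pointChargePotential (n := ω) (hray s hs)).comp s
      (f := fun s : ℝ => p₀ + s • u) (by fun_prop)).analyticAt
  rcases han.eqOn_or_eventually_ne_of_preconnected analyticOnNhd_const isPreconnected_Ioi with
    hconst | hne
  · obtain ⟨s, hs, hst⟩ := exists_pos_pointChargePotential_ray_ne hA hu t
    exact absurd (hconst hs) hst
  · rw [← Measure.restrict_apply' measurableSet_Ioi]
    exact measure_eq_zero_iff_ae_notMem.2 (ae_restrict_le_codiscreteWithin measurableSet_Ioi hne)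

theorem measure_pointChargePotential_eq_null [FiniteDimensional ℝ E] [MeasurableSpace E]
    [BorelSpace E] (μ : Measure E) [μ.IsAddHaarMeasure] (hE : 1 < finrank ℝ E)
    {A : E →₀ ℝ} (hA : A ≠ 0) (t : ℝ) : μ {x | pointChargePotential A x = t} = 0 := by
  obtain ⟨p₀, hp₀⟩ : ∃ p₀, A p₀ ≠ 0 := by simpa [DFunLike.ext_iff] using hA
  have : Nontrivial E := Module.nontrivial_of_finrank_pos (zero_lt_one.trans hE)
  set bad : Set (sphere (0 : E) 1) := {u | ∃ s > (0 : ℝ), p₀ + s • (u : E) ∈ A.support}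
  -- a ray from `p₀` can only hit the charge at `p` in the direction of `p - p₀`
  have hbad : bad.Finite := by
    refine ((A.support.finite_toSet.image fun p => ‖p - p₀‖⁻¹ • (p - p₀)).preimage
      Subtype.val_injective.injOn).subset ?_
    rintro u ⟨s, hs, hp⟩
    refine ⟨_, hp, ?_⟩
    simp [norm_smul, abs_of_pos hs, norm_eq_of_mem_sphere u, inv_smul_smul₀ hs.ne']
  rw [← measure_preimage_add μ p₀]
  refine measure_eq_zero_of_ae_toSphere_ray μ
    (measurableSet_eq_fun ((measurable_pointChargePotential A).comp (measurable_const_add p₀))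
      measurable_const) ?_
  filter_upwards [measure_eq_zero_iff_ae_notMem.1 (μ.toSphere_finite hE hbad)] with u hu
  exact volume_pointChargePotential_ray_eq_null hp₀ (norm_eq_of_mem_sphere u)
    (fun s hs h => hu ⟨s, hs, h⟩) t

end Rays

/-- Hohenberg–Kohn theorem for Coulomb systems (abstract form): suppose each
index `v` in a family carries a Coulomb potential `pot v` (with singular set
`sing v`), a normalized ground state `Ψ v`, a density `ρ v` and an energy
`En v`, such that equal densities force the variational a.e. identity
`(Σᵢ(v'−v)(xᵢ) − ΔE)·Ψ_v = 0`. Then the map `v ↦ ρ v` is injective: equal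
densities imply equal potentials (off the singular sets), with no
additive-constant ambiguity. -/
theorem hohenberg_kohn_coulomb {N : ℕ} (hN : 1 ≤ N) {V : Type*}
    (pot : V → EuclideanSpace ℝ (Fin 3) → ℝ)
    (sing : V → Set (EuclideanSpace ℝ (Fin 3)))
    (hC : ∀ v, IsCoulombPot (pot v) (sing v))
    (Ψ : V → (Fin N → EuclideanSpace ℝ (Fin 3)) → ℂ)
    (ρ : V → EuclideanSpace ℝ (Fin 3) → ℝ) (En : V → ℝ)
    (hnorm : ∀ v, ∫ X, ‖Ψ v X‖ ^ 2 ∂volume = 1)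
    (hkey : ∀ v v', ρ v = ρ v' →
      ∀ᵐ X ∂volume,
        ((∑ i, ((pot v' (X i) - pot v (X i) : ℝ) : ℂ)) - ((En v' - En v : ℝ) : ℂ))
          * Ψ v X = 0) :
    ∀ v v', ρ v = ρ v' → ∀ x ∉ sing v ∪ sing v', pot v x = pot v' x := by
  intro v v' hρ
  obtain ⟨A, hA⟩ := (hC v).exists_eq_pointChargePotential
  obtain ⟨A', hA'⟩ := (hC v').exists_eq_pointChargePotential
  have hdiff : ∀ x ∉ sing v ∪ sing v', pot v' x - pot v x = pointChargePotential (A' - A) x := by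
    intro x hx
    rw [mem_union, not_or] at hx
    rw [pointChargePotential_sub, ← hA x hx.1, ← hA' x hx.2]
  by_contra! ⟨x₀, hx₀, hne⟩
  have hAA : A' - A ≠ 0 := fun h => hne <| by
    linarith [h ▸ hdiff x₀ hx₀, pointChargePotential_zero x₀]
  have hregular : ∀ᵐ X : Fin N → ℝ³ ∂volume, ∀ i, X i ∉ sing v ∪ sing v' :=
    ae_pi_forall_notMem (((hC v).finite.union (hC v').finite).measure_zero volume)
  have hlevel : ∀ᵐ X : Fin N → ℝ³ ∂volume,
      ∑ i, pointChargePotential (A' - A) (X i) ≠ En v' - En v :=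
    measure_eq_zero_iff_ae_notMem.1 <| measure_pi_sum_comp_eq_null
      (measurable_pointChargePotential _)
      (measure_pointChargePotential_eq_null volume (by simp) hAA) hN _
  have hΨ : Ψ v =ᵐ[volume] 0 := by
    filter_upwards [hkey v v' hρ, hregular, hlevel] with X hX hXreg hXlev
    have : ∑ i, (pot v' (X i) - pot v (X i)) ≠ En v' - En v := by
      simpa [hdiff _ (hXreg _)] using hXlev
    exact (mul_eq_zero.1 hX).resolve_left (sub_ne_zero.2 (by exact_mod_cast this))
  have h1 := hnorm v
  rw [integral_congr_ae (g := 0) (hΨ.mono fun X hX => by simp [hX])] at h1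
  simp at h1
end
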